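/- Let u : ℝ⁴ → ℝ be smooth with u₁₃u₂₄ - u₁₄u₂₃ = 1 everywhere (first Plebański equation). Then the two vector fields X = u₁₃∂₂ - u₂₃∂₁ and Y = u₁₄∂₂ - u₂₄∂₁ on ℝ⁴ satisfy [X, Y] = 0 and [∂₃, Y] = [∂₄, X] as vector fields, where the latter equality follows from symmetry of second derivatives; consequently [L₀, L₁] = 0 for L₀ = -∂₃ + λX, L₁ = -∂₄ + λY and all λ ∈ ℝ. -/

import Mathlib

noncomputable def pd {n : ℕ} (i : Fin n) (f : (Fin n → ℝ) → ℝ) (x : Fin n → ℝ) : ℝ :=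
  fderiv ℝ f x (Pi.single i 1)

noncomputable def br {n : ℕ} (X Y : (Fin n → ℝ) → (Fin n → ℝ)) (x : Fin n → ℝ) : Fin n → ℝ :=
  fun k => ∑ j, (X x j * pd j (fun y => Y y k) x - Y x j * pd j (fun y => X y k) x)

/-- X = u₁₃∂₂ - u₂₃∂₁. -/
noncomputable def X (u : (Fin 4 → ℝ) → ℝ) : (Fin 4 → ℝ) → (Fin 4 → ℝ) :=
  fun x => ![-(pd 1 (pd 2 u) x), pd 0 (pd 2 u) x, 0, 0]

/-- Y = u₁₄∂₂ - u₂₄∂₁. -/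
noncomputable def Y (u : (Fin 4 → ℝ) → ℝ) : (Fin 4 → ℝ) → (Fin 4 → ℝ) :=
  fun x => ![-(pd 1 (pd 3 u) x), pd 0 (pd 3 u) x, 0, 0]

/-- ∂₃ and ∂₄ as constant vector fields. -/
def e (k : Fin 4) : (Fin 4 → ℝ) → (Fin 4 → ℝ) := fun _ => Pi.single k 1

lemma pd_contDiff {n : ℕ} {f : (Fin n → ℝ) → ℝ} (hf : ContDiff ℝ (⊤ : ℕ∞) f) (i : Fin n) :
    ContDiff ℝ (⊤ : ℕ∞) (pd i f) := by
  have h : ContDiff ℝ (⊤ : ℕ∞) (fderiv ℝ f) := (hf.fderiv_right (m := (⊤ : ℕ∞)) le_rfl)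
  exact (ContinuousLinearMap.apply ℝ ℝ (Pi.single i 1)).contDiff.comp h

lemma pd_comm {n : ℕ} {f : (Fin n → ℝ) → ℝ} (hf : ContDiff ℝ (⊤ : ℕ∞) f) (i j : Fin n) (x : Fin n → ℝ) :
    pd i (pd j f) x = pd j (pd i f) x := by
  have hsymm : IsSymmSndFDerivAt ℝ f x :=
    (hf.contDiffAt).isSymmSndFDerivAt (n := (⊤ : ℕ∞)) (by rw [minSmoothness_of_isRCLikeNormedField]; exact WithTop.coe_le_coe.mpr (le_top : (2:ℕ∞) ≤ ⊤))
  have hd : ContDiff ℝ (⊤ : ℕ∞) (fderiv ℝ f) := hf.fderiv_right (m := (⊤ : ℕ∞)) le_rfl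
  have key : ∀ v w : Fin n → ℝ,
      fderiv ℝ (fun y => fderiv ℝ f y w) x v = fderiv ℝ (fderiv ℝ f) x v w := by
    intro v w
    have : (fun y => fderiv ℝ f y w) = (ContinuousLinearMap.apply ℝ ℝ w) ∘ (fderiv ℝ f) := rfl
    rw [this, fderiv_comp x ((ContinuousLinearMap.apply ℝ ℝ w).differentiableAt)
      (hd.differentiable (by simp) x), ContinuousLinearMap.fderiv]
    rfl
  show fderiv ℝ (fun y => fderiv ℝ f y (Pi.single j 1)) x (Pi.single i 1)
      = fderiv ℝ (fun y => fderiv ℝ f y (Pi.single i 1)) x (Pi.single j 1)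
  rw [key, key, hsymm]

lemma pd_const {n : ℕ} (i : Fin n) (c : ℝ) (x : Fin n → ℝ) : pd i (fun _ => c) x = 0 := by
  simp [pd]

lemma pd_neg {n : ℕ} (i : Fin n) (f : (Fin n → ℝ) → ℝ) (x : Fin n → ℝ) :
    pd i (fun y => -(f y)) x = -(pd i f x) := by
  simp [pd, fderiv_neg]

lemma pd_mul {n : ℕ} (i : Fin n) {f g : (Fin n → ℝ) → ℝ} (x : Fin n → ℝ)
    (hf : DifferentiableAt ℝ f x) (hg : DifferentiableAt ℝ g x) :
    pd i (fun y => f y * g y) x = pd i f x * g x + f x * pd i g x := by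
  simp [pd, fderiv_fun_mul hf hg]; ring

lemma pd_sub {n : ℕ} (i : Fin n) {f g : (Fin n → ℝ) → ℝ} (x : Fin n → ℝ)
    (hf : DifferentiableAt ℝ f x) (hg : DifferentiableAt ℝ g x) :
    pd i (fun y => f y - g y) x = pd i f x - pd i g x := by
  simp [pd, fderiv_fun_sub hf hg]

lemma pd_const_add_mul {n : ℕ} (i : Fin n) (c lam : ℝ) {f : (Fin n → ℝ) → ℝ} (x : Fin n → ℝ)
    (hf : DifferentiableAt ℝ f x) :
    pd i (fun y => c + lam * f y) x = lam * pd i f x := by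
  rw [show (fun y => c + lam * f y) = fun y => (fun y => c) y + (fun y => lam * f y) y from rfl,
      pd]
  rw [fderiv_fun_add (differentiableAt_const c) ((hf.const_mul lam)), fderiv_fun_const]
  simp [fderiv_const_mul hf, pd]


theorem stmt11 (u : (Fin 4 → ℝ) → ℝ) (hu : ContDiff ℝ (⊤ : ℕ∞) u)
    (hpleb : ∀ x : Fin 4 → ℝ,
        pd 0 (pd 2 u) x * pd 1 (pd 3 u) x - pd 0 (pd 3 u) x * pd 1 (pd 2 u) x = 1) :
    (∀ x, br (X u) (Y u) x = 0)
    ∧ (∀ x, br (e 2) (Y u) x = br (e 3) (X u) x)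
    ∧ (∀ (lam : ℝ) (x : Fin 4 → ℝ),
        br (fun y => -(e 2 y) + lam • X u y) (fun y => -(e 3 y) + lam • Y u y) x = 0) := by
  have key1 : ∀ x, br (X u) (Y u) x = 0 := by
    have h2 : ContDiff ℝ (⊤ : ℕ∞) (pd 2 u) := pd_contDiff hu 2
    have h3 : ContDiff ℝ (⊤ : ℕ∞) (pd 3 u) := pd_contDiff hu 3
    have ha : ContDiff ℝ (⊤ : ℕ∞) (pd 0 (pd 2 u)) := pd_contDiff h2 0
    have hb : ContDiff ℝ (⊤ : ℕ∞) (pd 1 (pd 2 u)) := pd_contDiff h2 1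
    have hc : ContDiff ℝ (⊤ : ℕ∞) (pd 0 (pd 3 u)) := pd_contDiff h3 0
    have hd : ContDiff ℝ (⊤ : ℕ∞) (pd 1 (pd 3 u)) := pd_contDiff h3 1
    have hP : ∀ (j : Fin 4) (x : Fin 4 → ℝ),
        pd j (pd 0 (pd 2 u)) x * pd 1 (pd 3 u) x + pd 0 (pd 2 u) x * pd j (pd 1 (pd 3 u)) x
        - (pd j (pd 0 (pd 3 u)) x * pd 1 (pd 2 u) x + pd 0 (pd 3 u) x * pd j (pd 1 (pd 2 u)) x)
        = 0 := by
      intro j x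
      have hfun : (fun x => pd 0 (pd 2 u) x * pd 1 (pd 3 u) x
          - pd 0 (pd 3 u) x * pd 1 (pd 2 u) x) = fun _ => (1:ℝ) := funext hpleb
      have h0 : pd j (fun x => pd 0 (pd 2 u) x * pd 1 (pd 3 u) x
          - pd 0 (pd 3 u) x * pd 1 (pd 2 u) x) x = 0 := by rw [hfun]; exact pd_const j 1 x
      rw [pd_sub j x (f := fun y => pd 0 (pd 2 u) y * pd 1 (pd 3 u) y)
          (g := fun y => pd 0 (pd 3 u) y * pd 1 (pd 2 u) y) ((ha.differentiable (by simp) x).mul (hd.differentiable (by simp) x))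
          ((hc.differentiable (by simp) x).mul (hb.differentiable (by simp) x)),
          pd_mul j x (ha.differentiable (by simp) x) (hd.differentiable (by simp) x),
          pd_mul j x (hc.differentiable (by simp) x) (hb.differentiable (by simp) x)] at h0
      linarith
    intro x
    funext k
    have hba : pd 0 (pd 1 (pd 2 u)) x = pd 1 (pd 0 (pd 2 u)) x := pd_comm h2 0 1 x
    have hdc : pd 0 (pd 1 (pd 3 u)) x = pd 1 (pd 0 (pd 3 u)) x := pd_comm h3 0 1 x
    fin_cases k <;>
      simp [br, Fin.sum_univ_four, X, Y, pd_neg, pd_const]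
    · rw [hba, hdc]; linear_combination -(hP 1 x)
    · have h0 := hP 0 x
      rw [hba, hdc] at h0
      linear_combination h0
  have key2 : ∀ x, br (e 2) (Y u) x = br (e 3) (X u) x := by
    have h2 : ContDiff ℝ (⊤ : ℕ∞) (pd 2 u) := pd_contDiff hu 2
    have h3 : ContDiff ℝ (⊤ : ℕ∞) (pd 3 u) := pd_contDiff hu 3
    have hswap : pd 2 (pd 3 u) = pd 3 (pd 2 u) := funext (pd_comm hu 2 3)
    intro x
    funext k
    fin_cases k <;>
      simp [br, Fin.sum_univ_four, X, Y, e, pd_neg, pd_const, Pi.single_apply]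
    · rw [pd_comm h3 2 1 x, hswap, pd_comm h2 1 3 x]
    · rw [pd_comm h3 2 0 x, hswap, pd_comm h2 0 3 x]
  refine ⟨key1, key2, ?_⟩
  have h2 : ContDiff ℝ (⊤ : ℕ∞) (pd 2 u) := pd_contDiff hu 2
  have h3 : ContDiff ℝ (⊤ : ℕ∞) (pd 3 u) := pd_contDiff hu 3
  have ha : ContDiff ℝ (⊤ : ℕ∞) (pd 0 (pd 2 u)) := pd_contDiff h2 0
  have hb : ContDiff ℝ (⊤ : ℕ∞) (pd 1 (pd 2 u)) := pd_contDiff h2 1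
  have hc : ContDiff ℝ (⊤ : ℕ∞) (pd 0 (pd 3 u)) := pd_contDiff h3 0
  have hd : ContDiff ℝ (⊤ : ℕ∞) (pd 1 (pd 3 u)) := pd_contDiff h3 1
  have hXd : ∀ (k : Fin 4), Differentiable ℝ (fun y => X u y k) := by
    intro k
    fin_cases k
    · exact (hb.differentiable (by simp)).neg
    · exact ha.differentiable (by simp)
    · exact differentiable_const 0
    · exact differentiable_const 0
  have hYd : ∀ (k : Fin 4), Differentiable ℝ (fun y => Y u y k) := by
    intro k
    fin_cases k
    · exact (hd.differentiable (by simp)).neg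
    · exact hc.differentiable (by simp)
    · exact differentiable_const 0
    · exact differentiable_const 0
  intro lam x
  have h1 : ∀ (j k : Fin 4), pd j (fun y => -(e 3 y k) + lam * Y u y k) x
      = lam * pd j (fun y => Y u y k) x := by
    intro j k
    simp only [e]
    exact pd_const_add_mul j _ lam x (hYd k x)
  have h0 : ∀ (j k : Fin 4), pd j (fun y => -(e 2 y k) + lam * X u y k) x
      = lam * pd j (fun y => X u y k) x := by
    intro j k
    simp only [e]
    exact pd_const_add_mul j _ lam x (hXd k x)
  funext k
  have P1 := congrFun (key1 x) k
  have P2 := congrFun (key2 x) k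
  simp only [br, Fin.sum_univ_four, Pi.zero_apply] at P1 P2
  simp only [e, Pi.single_apply] at P2
  simp only [pd_const, mul_zero, zero_mul, sub_zero, add_zero, zero_add, mul_one, one_mul] at P2
  simp at P2
  simp only [br, Fin.sum_univ_four, Pi.zero_apply, Pi.add_apply, Pi.neg_apply, Pi.smul_apply,
    smul_eq_mul, h0, h1]
  simp only [e, Pi.single_apply]
  simp
  linear_combination lam^2 * P1 - lam * P2
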